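/- arXiv:1909.09680 — 5 statements merged into one kernel-verified Lean document; each statement's English description precedes it below -/
import Mathlib

section
/- For every real x ≥ 0, e^{-x} = (4π)^{-1/2} ∫_0^∞ t^{-3/2} exp(-1/(4t)) e^{-t x²} dt. -/
/-!
Substituting `t = 1 / (4 s²)` turns the integral into `4 ∫₀^∞ exp (-s² - a² / s²) ds` with
`a = x / 2`, and `-s² - a² / s² = -2a - (s - a / s)²`. The remaining integral is `√π / 2` by the
Cauchy–Schlömilch substitution `u = s - a / s`: it maps `(0, ∞)` bijectively onto `ℝ` with
`du = (1 + a / s²) ds`, and the inversion `s ↦ a / s` turns the part `a / s² ds` of the measure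
into `ds` while changing the sign of `u`, so for an even integrand both parts contribute equally.
-/

open Real MeasureTheory Set

section

variable {E : Type*} [NormedAddCommGroup E] [NormedSpace ℝ E] {a : ℝ}

theorem hasDerivAt_sub_div (a : ℝ) {s : ℝ} (hs : s ≠ 0) :
    HasDerivAt (fun s : ℝ => s - a / s) (1 + a / s ^ 2) s := by
  simp only [div_eq_mul_inv]
  exact ((hasDerivAt_id s).sub ((hasDerivAt_inv hs).const_mul a)).congr_deriv (by ring)

theorem strictMonoOn_sub_div (ha : 0 ≤ a) : StrictMonoOn (fun s : ℝ => s - a / s) (Ioi 0) := by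
  intro s hs t _ hst
  dsimp only
  linarith [div_le_div_of_nonneg_left ha hs hst.le]

theorem image_sub_div_Ioi (ha : 0 < a) : (fun s : ℝ => s - a / s) '' Ioi 0 = univ := by
  refine eq_univ_of_forall fun u => ?_
  have hdisc : u ^ 2 < √(u ^ 2 + 4 * a) ^ 2 := by
    rw [sq_sqrt (by positivity)]; linarith
  have hroot : 0 < u + √(u ^ 2 + 4 * a) := by
    nlinarith [abs_lt_of_sq_lt_sq' hdisc (sqrt_nonneg _)]
  refine ⟨(u + √(u ^ 2 + 4 * a)) / 2, by simpa using hroot, ?_⟩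
  field_simp
  nlinarith [sq_sqrt (show 0 ≤ u ^ 2 + 4 * a by positivity)]

theorem image_div_Ioi (ha : 0 < a) : (fun s : ℝ => a / s) '' Ioi 0 = Ioi 0 := by
  ext t
  refine ⟨?_, fun ht => ⟨a / t, div_pos ha ht, div_div_cancel₀ ha.ne'⟩⟩
  rintro ⟨s, hs, rfl⟩
  exact div_pos ha hs

theorem integral_Ioi_div_sq_smul_comp_div (ha : 0 < a) (g : ℝ → E) :
    ∫ s in Ioi 0, (a / s ^ 2) • g (a / s) = ∫ s in Ioi 0, g s := by
  have hderiv : ∀ s ∈ Ioi (0 : ℝ), HasDerivWithinAt (fun s => a / s) (-(a / s ^ 2)) (Ioi 0) s :=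
    fun s hs => by
      simpa [div_eq_mul_inv] using ((hasDerivAt_inv (ne_of_gt hs)).const_mul a).hasDerivWithinAt
  have hinj : InjOn (fun s : ℝ => a / s) (Ioi 0) := fun s _ t _ h => by
    simpa [div_div_cancel₀ ha.ne'] using congrArg (a / ·) h
  conv_rhs => rw [← image_div_Ioi ha,
    integral_image_eq_integral_abs_deriv_smul measurableSet_Ioi hderiv hinj]
  refine setIntegral_congr_fun measurableSet_Ioi fun s hs => ?_
  simp only [abs_neg, abs_of_pos (show 0 < a / s ^ 2 from div_pos ha (pow_pos hs 2))]

theorem integral_Ioi_one_add_div_sq_smul_comp_sub_div (ha : 0 < a) (f : ℝ → E) :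
    ∫ s in Ioi 0, (1 + a / s ^ 2) • f (s - a / s) = ∫ u, f u := by
  have hderiv : ∀ s ∈ Ioi (0 : ℝ), HasDerivWithinAt _ (1 + a / s ^ 2) (Ioi 0) s :=
    fun s hs => (hasDerivAt_sub_div a (ne_of_gt hs)).hasDerivWithinAt
  have h := integral_image_eq_integral_abs_deriv_smul measurableSet_Ioi hderiv
    (strictMonoOn_sub_div ha.le).injOn f
  rw [image_sub_div_Ioi ha, Measure.restrict_univ] at h
  rw [h]
  refine setIntegral_congr_fun measurableSet_Ioi fun s _ => ?_
  rw [abs_of_pos (by positivity)]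

theorem integrableOn_Ioi_one_add_div_sq_smul_comp_sub_div (ha : 0 < a) {f : ℝ → E}
    (hf : Integrable f) : IntegrableOn (fun s => (1 + a / s ^ 2) • f (s - a / s)) (Ioi 0) := by
  have hderiv : ∀ s ∈ Ioi (0 : ℝ), HasDerivWithinAt _ (1 + a / s ^ 2) (Ioi 0) s :=
    fun s hs => (hasDerivAt_sub_div a (ne_of_gt hs)).hasDerivWithinAt
  have h := integrableOn_image_iff_integrableOn_abs_deriv_smul measurableSet_Ioi hderiv
    (strictMonoOn_sub_div ha.le).injOn f
  rw [image_sub_div_Ioi ha, integrableOn_univ] at h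
  refine (h.1 hf).congr_fun (fun s _ => ?_) measurableSet_Ioi
  dsimp only
  rw [abs_of_pos (by positivity)]

theorem integrableOn_Ioi_comp_sub_div (ha : 0 < a) {f : ℝ → E} (hf : Integrable f) :
    IntegrableOn (fun s => f (s - a / s)) (Ioi 0) := by
  have hbound : ∀ s : ℝ, ‖(1 + a / s ^ 2)⁻¹‖ ≤ 1 := fun s => by
    rw [norm_inv, Real.norm_of_nonneg (by positivity)]
    exact inv_le_one_of_one_le₀ (by simp only [le_add_iff_nonneg_right]; positivity)
  have hmeas : Measurable fun s : ℝ => (1 + a / s ^ 2)⁻¹ := by fun_prop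
  refine ((integrableOn_Ioi_one_add_div_sq_smul_comp_sub_div ha hf).bdd_smul 1
    hmeas.aestronglyMeasurable (ae_of_all _ hbound)).congr (ae_of_all _ fun s => ?_)
  simp only [Pi.smul_apply']
  exact inv_smul_smul₀ (by positivity) _

theorem integral_Ioi_comp_sub_div_add_integral_Ioi_comp_div_sub (ha : 0 < a) {f : ℝ → E}
    (hf : Integrable f) :
    (∫ s in Ioi 0, f (s - a / s)) + ∫ s in Ioi 0, f (a / s - s) = ∫ u, f u := by
  have hflip : ∫ s in Ioi 0, f (a / s - s) = ∫ s in Ioi 0, (a / s ^ 2) • f (s - a / s) := by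
    rw [← integral_Ioi_div_sq_smul_comp_div ha]
    simp only [div_div_cancel₀ ha.ne']
  have hcomp := integrableOn_Ioi_comp_sub_div ha hf
  have hrest : IntegrableOn (fun s => (a / s ^ 2) • f (s - a / s)) (Ioi 0) := by
    refine ((integrableOn_Ioi_one_add_div_sq_smul_comp_sub_div ha hf).sub hcomp).congr_fun
      (fun s _ => ?_) measurableSet_Ioi
    simp [add_smul]
  rw [hflip, ← integral_add hcomp hrest, ← integral_Ioi_one_add_div_sq_smul_comp_sub_div ha f]
  simp only [add_smul, one_smul]

theorem integral_Ioi_exp_neg_sq_sub_div (ha : 0 < a) :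
    ∫ s in Ioi 0, exp (-(s - a / s) ^ 2) = √π / 2 := by
  have h := integral_Ioi_comp_sub_div_add_integral_Ioi_comp_div_sub ha
    (f := fun u => exp (-u ^ 2)) (by simpa using integrable_exp_neg_mul_sq one_pos)
  have hgauss : ∫ u : ℝ, exp (-u ^ 2) = √π := by simpa using integral_gaussian 1
  have heven : ∀ s : ℝ, (a / s - s) ^ 2 = (s - a / s) ^ 2 := fun s => by ring
  simp only [heven, hgauss] at h
  linarith

theorem integral_Ioi_exp_neg_sq_sub_sq_div_sq (ha : 0 ≤ a) :
    ∫ s in Ioi 0, exp (-s ^ 2 - a ^ 2 / s ^ 2) = √π / 2 * exp (-(2 * a)) := by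
  rcases ha.eq_or_lt with rfl | ha
  · simpa using integral_gaussian_Ioi 1
  have hsq : ∀ s ∈ Ioi (0 : ℝ),
      exp (-s ^ 2 - a ^ 2 / s ^ 2) = exp (-(2 * a)) * exp (-(s - a / s) ^ 2) := fun s hs => by
    have : s ≠ 0 := ne_of_gt hs
    rw [← exp_add]
    congr 1
    field_simp
    ring
  rw [setIntegral_congr_fun measurableSet_Ioi hsq, integral_const_mul,
    integral_Ioi_exp_neg_sq_sub_div ha, mul_comm]

theorem inv_four_mul_sq_rpow {s : ℝ} (hs : 0 < s) :
    (4 * s ^ 2)⁻¹ ^ (-(3 : ℝ) / 2) = 8 * s ^ 3 := by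
  rw [show (4 * s ^ 2)⁻¹ = (2 * s) ^ (-2 : ℝ) by rw [rpow_neg (by positivity), rpow_two]; ring,
    ← rpow_mul (by positivity)]
  norm_num
  ring

theorem image_inv_four_mul_sq_Ioi : (fun s : ℝ => (4 * s ^ 2)⁻¹) '' Ioi 0 = Ioi 0 := by
  ext t
  constructor
  · rintro ⟨s, hs, rfl⟩
    have : 0 < s := hs
    exact mem_Ioi.2 (by positivity)
  · intro ht
    have ht : 0 < t := ht
    refine ⟨(2 * √t)⁻¹, mem_Ioi.2 (by positivity), ?_⟩
    dsimp only
    rw [inv_pow, mul_pow, sq_sqrt ht.le]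
    field_simp
    norm_num

theorem strictAntiOn_inv_four_mul_sq : StrictAntiOn (fun s : ℝ => (4 * s ^ 2)⁻¹) (Ioi 0) :=
  fun s hs t _ hst => by
    simp only [mem_Ioi] at hs
    dsimp only
    gcongr

theorem hasDerivAt_inv_four_mul_sq {s : ℝ} (hs : s ≠ 0) :
    HasDerivAt (fun s : ℝ => (4 * s ^ 2)⁻¹) (-(2 * s ^ 3)⁻¹) s := by
  have h := ((hasDerivAt_pow 2 s).const_mul 4).inv (by positivity)
  exact h.congr_deriv (by field_simp; ring)

theorem integral_Ioi_comp_inv_four_mul_sq (g : ℝ → E) :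
    ∫ s in Ioi 0, (2 * s ^ 3)⁻¹ • g (4 * s ^ 2)⁻¹ = ∫ t in Ioi 0, g t := by
  have hderiv : ∀ s ∈ Ioi (0 : ℝ), HasDerivWithinAt _ (-(2 * s ^ 3)⁻¹) (Ioi 0) s :=
    fun s hs => (hasDerivAt_inv_four_mul_sq (ne_of_gt hs)).hasDerivWithinAt
  conv_rhs => rw [← image_inv_four_mul_sq_Ioi, integral_image_eq_integral_abs_deriv_smul
    measurableSet_Ioi hderiv strictAntiOn_inv_four_mul_sq.injOn]
  refine setIntegral_congr_fun measurableSet_Ioi fun s hs => ?_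
  have : 0 < s := hs
  rw [abs_neg, abs_of_pos (by positivity)]

end

/-- Subordination identity: e^{-x} = (4π)^{-1/2} ∫_0^∞ t^{-3/2} e^{-1/(4t)} e^{-t x²} dt. -/
theorem subordination (x : ℝ) (hx : 0 ≤ x) :
    Real.exp (-x) =
      (4 * π) ^ (-(1 : ℝ) / 2) *
        ∫ t in Set.Ioi (0 : ℝ),
          t ^ (-(3 : ℝ) / 2) * Real.exp (-1 / (4 * t)) * Real.exp (-t * x ^ 2) := by
  have hconst : (4 * π) ^ (-(1 : ℝ) / 2) = (2 * √π)⁻¹ := by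
    rw [neg_div, rpow_neg (by positivity), ← sqrt_eq_rpow, sqrt_mul (by norm_num),
      show √(4 : ℝ) = 2 by rw [show (4 : ℝ) = 2 ^ 2 by norm_num, sqrt_sq zero_le_two]]
  have hintegrand : ∀ s ∈ Ioi (0 : ℝ),
      (2 * s ^ 3)⁻¹ • ((4 * s ^ 2)⁻¹ ^ (-(3 : ℝ) / 2) * exp (-1 / (4 * (4 * s ^ 2)⁻¹))
        * exp (-(4 * s ^ 2)⁻¹ * x ^ 2)) = 4 * exp (-s ^ 2 - (x / 2) ^ 2 / s ^ 2) := by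
    intro s hs
    have hs : 0 < s := hs
    have hexp : -1 / (4 * (4 * s ^ 2)⁻¹) + -(4 * s ^ 2)⁻¹ * x ^ 2
        = -s ^ 2 - (x / 2) ^ 2 / s ^ 2 := by
      field_simp
      ring
    rw [inv_four_mul_sq_rpow hs, smul_eq_mul, mul_assoc _ (exp _), ← exp_add, hexp]
    field_simp
    ring
  rw [← integral_Ioi_comp_inv_four_mul_sq, setIntegral_congr_fun measurableSet_Ioi hintegrand,
    integral_const_mul, integral_Ioi_exp_neg_sq_sub_sq_div_sq (by positivity), hconst]
  field_simp
  ring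
end

section
/- For all real x > 0, 1/(e^x - 1) = ∫_0^∞ h_b(t) e^{-t x²} dt, where h_b(t) = (4π)^{-1/2} t^{-3/2} ∑_{k=1}^∞ k·exp(-k²/(4t)). -/
/-!
Since 1/(eˣ - 1) = ∑_{k ≥ 1} e^{-kx}, it suffices to subordinate each e^{-κx} to the heat
semigroup, e^{-κx} = ∫₀^∞ ρ_κ(t) e^{-tx²} dt with the Lévy density
ρ_κ(t) = κ (4π)^{-1/2} t^{-3/2} e^{-κ²/(4t)}, and to swap sum and integral, which is legitimate
because every term is nonnegative and the integrals e^{-kx} are summable.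

The subordination identity is ∫₀^∞ t^{-3/2} e^{-(a²/t + b²t)} dt = (√π / a) e^{-2ab}. The
substitution u = b√t - a/√t maps (0, ∞) onto ℝ and turns
(b/2 t^{-1/2} + a/2 t^{-3/2}) e^{-(a²/t + b²t)} dt into e^{-2ab} e^{-u²} du, and the inversion
t ↦ a²/(b²t) shows that the two halves of this weight have the same integral.
-/

open Real MeasureTheory Set

lemma integral_comp_div_Ioi {E : Type*} [NormedAddCommGroup E] [NormedSpace ℝ E] (g : ℝ → E)
    {c : ℝ} (hc : 0 < c) : ∫ t in Ioi 0, (c / t ^ 2) • g (c / t) = ∫ t in Ioi 0, g t := by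
  have himage : (fun t => c / t) '' Ioi 0 = Ioi 0 := by
    refine Subset.antisymm (image_subset_iff.2 fun t ht => div_pos hc ht) fun s hs => ?_
    exact ⟨c / s, div_pos hc hs, div_div_cancel₀ hc.ne'⟩
  have hderiv (t : ℝ) (ht : t ∈ Ioi 0) :
      HasDerivWithinAt (fun t => c / t) (-c / t ^ 2) (Ioi 0) t :=
    ((hasDerivAt_const t c).div (hasDerivAt_id t) ht.out.ne').hasDerivWithinAt.congr_deriv
      (by simp)
  have hinj : InjOn (fun t => c / t) (Ioi 0) := fun s _ t _ (h : c / s = c / t) => by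
    rw [← div_div_cancel₀ (b := s) hc.ne', h, div_div_cancel₀ hc.ne']
  conv_rhs =>
    rw [← himage, integral_image_eq_integral_abs_deriv_smul measurableSet_Ioi hderiv hinj]
  refine setIntegral_congr_fun measurableSet_Ioi fun t ht => ?_
  rw [neg_div, abs_neg, abs_of_pos (div_pos hc (pow_pos ht.out 2))]

section
variable {a b : ℝ}

lemma hasDerivAt_mul_rpow_half_sub {t : ℝ} (ht : 0 < t) :
    HasDerivAt (fun t : ℝ => b * t ^ (1/2 : ℝ) - a * t ^ (-1/2 : ℝ))
      (b / 2 * t ^ (-1/2 : ℝ) + a / 2 * t ^ (-3/2 : ℝ)) t := by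
  refine (((hasDerivAt_rpow_const (p := 1/2) (.inl ht.ne')).const_mul b).sub
    ((hasDerivAt_rpow_const (p := -1/2) (.inl ht.ne')).const_mul a)).congr_deriv ?_
  norm_num
  ring

lemma strictMonoOn_mul_rpow_half_sub (ha : 0 < a) (hb : 0 < b) :
    StrictMonoOn (fun t : ℝ => b * t ^ (1/2 : ℝ) - a * t ^ (-1/2 : ℝ)) (Ioi 0) := by
  refine strictMonoOn_of_deriv_pos (convex_Ioi 0)
    (fun t ht => (hasDerivAt_mul_rpow_half_sub ht).continuousAt.continuousWithinAt) ?_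
  intro t ht
  rw [interior_Ioi] at ht
  rw [(hasDerivAt_mul_rpow_half_sub ht).deriv]
  have := ht.out
  positivity

lemma mul_rpow_half_sub_sq {t : ℝ} (ht : 0 < t) :
    (b * t ^ (1/2 : ℝ) - a * t ^ (-1/2 : ℝ)) ^ 2 = a ^ 2 / t + b ^ 2 * t - 2 * a * b := by
  have h : t ^ (1/2 : ℝ) * t ^ (-1/2 : ℝ) = 1 := by rw [← rpow_add ht]; norm_num
  have h1 : t ^ (1/2 : ℝ) * t ^ (1/2 : ℝ) = t := by rw [← rpow_add ht]; norm_num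
  have h2 : t ^ (-1/2 : ℝ) * t ^ (-1/2 : ℝ) = t⁻¹ := by rw [← rpow_add ht]; norm_num [rpow_neg_one]
  linear_combination b ^ 2 * h1 - 2 * a * b * h + a ^ 2 * h2

lemma image_mul_rpow_half_sub (ha : 0 < a) (hb : 0 < b) :
    (fun t : ℝ => b * t ^ (1/2 : ℝ) - a * t ^ (-1/2 : ℝ)) '' Ioi 0 = univ := by
  refine eq_univ_of_forall fun y => ?_
  -- the preimage of y is t = s², with s the positive root of b s² - y s - a = 0
  set r := √(y ^ 2 + 4 * a * b)
  have hr : r ^ 2 = y ^ 2 + 4 * a * b := sq_sqrt (by positivity)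
  have hyr : |y| < r := by
    rw [← sqrt_sq_eq_abs]; exact sqrt_lt_sqrt (sq_nonneg _) (by nlinarith)
  have hyr' : 0 < y + r := by linarith [neg_abs_le y]
  set s := (y + r) / (2 * b)
  have hs : 0 < s := by positivity
  refine ⟨s ^ 2, pow_pos hs 2, ?_⟩
  have h1 : (s ^ 2) ^ (1/2 : ℝ) = s := by
    rw [← sqrt_eq_rpow, sqrt_sq hs.le]
  have h2 : (s ^ 2) ^ (-1/2 : ℝ) = s⁻¹ := by
    rw [neg_div, rpow_neg (by positivity), h1]
  simp only [h1, h2, s]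
  field_simp [hyr'.ne']
  linear_combination hr

lemma deriv_mul_exp_neg_div_add_mul_eq (ha : 0 < a) (hb : 0 < b) {t : ℝ} (ht : 0 < t) :
    (b / 2 * t ^ (-1/2 : ℝ) + a / 2 * t ^ (-3/2 : ℝ)) * exp (-(a ^ 2 / t + b ^ 2 * t)) =
      exp (-(2 * a * b)) * (|b / 2 * t ^ (-1/2 : ℝ) + a / 2 * t ^ (-3/2 : ℝ)| •
        exp (-(b * t ^ (1/2 : ℝ) - a * t ^ (-1/2 : ℝ)) ^ 2)) := by
  rw [smul_eq_mul, abs_of_pos (by positivity), mul_rpow_half_sub_sq ht, mul_left_comm, ← exp_add]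
  ring_nf

lemma integrableOn_deriv_mul_exp_neg_div_add_mul (ha : 0 < a) (hb : 0 < b) :
    IntegrableOn (fun t : ℝ => (b / 2 * t ^ (-1/2 : ℝ) + a / 2 * t ^ (-3/2 : ℝ)) *
      exp (-(a ^ 2 / t + b ^ 2 * t))) (Ioi 0) := by
  have hgauss := (integrableOn_image_iff_integrableOn_abs_deriv_smul measurableSet_Ioi
    (fun t ht => (hasDerivAt_mul_rpow_half_sub ht.out).hasDerivWithinAt)
    (strictMonoOn_mul_rpow_half_sub ha hb).injOn (fun u => exp (-u ^ 2))).1 <| by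
      rw [image_mul_rpow_half_sub ha hb, integrableOn_univ]
      simpa using integrable_exp_neg_mul_sq one_pos
  exact IntegrableOn.congr_fun (hgauss.const_mul _)
    (fun t ht => (deriv_mul_exp_neg_div_add_mul_eq ha hb ht.out).symm) measurableSet_Ioi

lemma integral_deriv_mul_exp_neg_div_add_mul (ha : 0 < a) (hb : 0 < b) :
    ∫ t in Ioi 0, (b / 2 * t ^ (-1/2 : ℝ) + a / 2 * t ^ (-3/2 : ℝ)) *
      exp (-(a ^ 2 / t + b ^ 2 * t)) = √π * exp (-(2 * a * b)) := by
  have hgauss := integral_image_eq_integral_abs_deriv_smul measurableSet_Ioi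
    (fun t ht => (hasDerivAt_mul_rpow_half_sub ht.out).hasDerivWithinAt)
    (strictMonoOn_mul_rpow_half_sub ha hb).injOn (fun u => exp (-u ^ 2))
  have hπ : ∫ u, exp (-u ^ 2) = √π := by simpa using integral_gaussian 1
  rw [image_mul_rpow_half_sub ha hb, setIntegral_univ, hπ] at hgauss
  rw [setIntegral_congr_fun measurableSet_Ioi
    (fun t ht => deriv_mul_exp_neg_div_add_mul_eq ha hb ht.out), integral_const_mul, ← hgauss,
    mul_comm]

lemma integral_rpow_neg_one_half_mul_exp_neg_div_add_mul (ha : 0 < a) (hb : 0 < b) :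
    ∫ t in Ioi 0, t ^ (-1/2 : ℝ) * exp (-(a ^ 2 / t + b ^ 2 * t)) =
      a / b * ∫ t in Ioi 0, t ^ (-3/2 : ℝ) * exp (-(a ^ 2 / t + b ^ 2 * t)) := by
  rw [← integral_comp_div_Ioi _ (pow_pos (div_pos ha hb) 2), ← integral_const_mul]
  refine setIntegral_congr_fun measurableSet_Ioi fun t (ht : 0 < t) => ?_
  have hq : ((a / b) ^ 2) ^ (-1/2 : ℝ) = b / a := by
    rw [← rpow_natCast, ← rpow_mul (by positivity)]
    norm_num [rpow_neg_one]
  have ht' : (t ^ 2)⁻¹ / t ^ (-1/2 : ℝ) = t ^ (-3/2 : ℝ) := by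
    rw [← rpow_natCast, ← rpow_neg ht.le, ← rpow_sub ht]
    norm_num
  have hE : a ^ 2 / ((a / b) ^ 2 / t) + b ^ 2 * ((a / b) ^ 2 / t) = a ^ 2 / t + b ^ 2 * t := by
    field_simp
    ring
  rw [smul_eq_mul, hE, div_rpow (by positivity) ht.le, hq, ← ht']
  field_simp

lemma continuousOn_rpow_mul_exp_neg_div_add_mul (p : ℝ) :
    ContinuousOn (fun t : ℝ => t ^ p * exp (-(a ^ 2 / t + b ^ 2 * t))) (Ioi 0) := by
  fun_prop (disch := intro t ht; exact ht.out.ne')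

lemma integrableOn_rpow_neg_three_halves_mul_exp_neg_div_add_mul (ha : 0 < a) (hb : 0 < b) :
    IntegrableOn (fun t : ℝ => t ^ (-3/2 : ℝ) * exp (-(a ^ 2 / t + b ^ 2 * t))) (Ioi 0) := by
  refine Integrable.mono' ((integrableOn_deriv_mul_exp_neg_div_add_mul ha hb).const_mul (2 / a))
    ((continuousOn_rpow_mul_exp_neg_div_add_mul _).aestronglyMeasurable measurableSet_Ioi)
    ((ae_restrict_iff' measurableSet_Ioi).2 (.of_forall fun t (ht : 0 < t) => ?_))
  rw [norm_of_nonneg (by positivity)]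
  calc t ^ (-3/2 : ℝ) * exp (-(a ^ 2 / t + b ^ 2 * t))
      ≤ t ^ (-3/2 : ℝ) * exp (-(a ^ 2 / t + b ^ 2 * t)) +
          b / a * t ^ (-1/2 : ℝ) * exp (-(a ^ 2 / t + b ^ 2 * t)) :=
        le_add_of_nonneg_right (by positivity)
    _ = _ := by field_simp; ring

lemma integrableOn_rpow_neg_one_half_mul_exp_neg_div_add_mul (ha : 0 < a) (hb : 0 < b) :
    IntegrableOn (fun t : ℝ => t ^ (-1/2 : ℝ) * exp (-(a ^ 2 / t + b ^ 2 * t))) (Ioi 0) := by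
  refine Integrable.mono' ((integrableOn_deriv_mul_exp_neg_div_add_mul ha hb).const_mul (2 / b))
    ((continuousOn_rpow_mul_exp_neg_div_add_mul _).aestronglyMeasurable measurableSet_Ioi)
    ((ae_restrict_iff' measurableSet_Ioi).2 (.of_forall fun t (ht : 0 < t) => ?_))
  rw [norm_of_nonneg (by positivity)]
  calc t ^ (-1/2 : ℝ) * exp (-(a ^ 2 / t + b ^ 2 * t))
      ≤ t ^ (-1/2 : ℝ) * exp (-(a ^ 2 / t + b ^ 2 * t)) +
          a / b * t ^ (-3/2 : ℝ) * exp (-(a ^ 2 / t + b ^ 2 * t)) :=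
        le_add_of_nonneg_right (by positivity)
    _ = _ := by field_simp

lemma integral_rpow_neg_three_halves_mul_exp_neg_div_add_mul (ha : 0 < a) (hb : 0 < b) :
    ∫ t in Ioi 0, t ^ (-3/2 : ℝ) * exp (-(a ^ 2 / t + b ^ 2 * t)) =
      √π / a * exp (-(2 * a * b)) := by
  set I := ∫ t in Ioi 0, t ^ (-3/2 : ℝ) * exp (-(a ^ 2 / t + b ^ 2 * t))
  have hsplit : √π * exp (-(2 * a * b)) = b / 2 * (a / b * I) + a / 2 * I := by
    rw [← integral_deriv_mul_exp_neg_div_add_mul ha hb,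
      ← integral_rpow_neg_one_half_mul_exp_neg_div_add_mul ha hb, ← integral_const_mul,
      ← integral_const_mul, ← integral_add
        ((integrableOn_rpow_neg_one_half_mul_exp_neg_div_add_mul ha hb).const_mul _)
        ((integrableOn_rpow_neg_three_halves_mul_exp_neg_div_add_mul ha hb).const_mul _)]
    exact setIntegral_congr_fun measurableSet_Ioi fun t _ => by ring
  rw [div_mul_eq_mul_div, hsplit]
  field_simp
  ring
end

lemma rpow_four_mul_pi_neg_one_half : (4 * π) ^ (-1/2 : ℝ) = (2 * √π)⁻¹ := by
  rw [show 4 * π = (2 * √π) ^ 2 by rw [mul_pow, sq_sqrt pi_pos.le]; norm_num, neg_div,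
    rpow_neg (by positivity), ← sqrt_eq_rpow, sqrt_sq (by positivity)]

noncomputable def levyDensity (κ t : ℝ) : ℝ :=
  (4 * π) ^ (-1/2 : ℝ) * t ^ (-3/2 : ℝ) * (κ * exp (-κ ^ 2 / (4 * t)))

lemma levyDensity_mul_exp_eq (κ x t : ℝ) :
    levyDensity κ t * exp (-t * x ^ 2) =
      (4 * π) ^ (-1/2 : ℝ) * κ * (t ^ (-3/2 : ℝ) * exp (-((κ / 2) ^ 2 / t + x ^ 2 * t))) := by
  rw [levyDensity, show -((κ / 2) ^ 2 / t + x ^ 2 * t) = -κ ^ 2 / (4 * t) + -t * x ^ 2 by ring,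
    exp_add]
  ring

section
variable {κ x : ℝ}

lemma integrableOn_levyDensity_mul_exp (hκ : 0 < κ) (hx : 0 < x) :
    IntegrableOn (fun t => levyDensity κ t * exp (-t * x ^ 2)) (Ioi 0) := by
  simp only [levyDensity_mul_exp_eq]
  exact (integrableOn_rpow_neg_three_halves_mul_exp_neg_div_add_mul (half_pos hκ) hx).const_mul _

lemma integral_levyDensity_mul_exp (hκ : 0 < κ) (hx : 0 < x) :
    ∫ t in Ioi 0, levyDensity κ t * exp (-t * x ^ 2) = exp (-(κ * x)) := by
  simp only [levyDensity_mul_exp_eq]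
  rw [integral_const_mul, integral_rpow_neg_three_halves_mul_exp_neg_div_add_mul (half_pos hκ) hx,
    rpow_four_mul_pi_neg_one_half]
  field_simp

lemma hasSum_exp_neg_succ_mul (hx : 0 < x) :
    HasSum (fun k : ℕ => exp (-((k + 1) * x))) (1 / (exp x - 1)) := by
  have hterm (k : ℕ) : exp (-((k + 1) * x)) = exp (-x) * exp (-x) ^ k := by
    rw [← exp_nat_mul, ← exp_add]
    ring_nf
  have hsum : 1 / (exp x - 1) = exp (-x) * (1 - exp (-x))⁻¹ := by
    have : 1 < exp x := one_lt_exp_iff.2 hx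
    rw [exp_neg]
    field_simp
  simpa only [hterm, hsum] using (hasSum_geometric_of_lt_one (exp_pos (-x)).le
    (exp_lt_one_iff.2 (neg_neg_of_pos hx))).mul_left (exp (-x))
end

/-- Heat kernel representation of the Bose distribution. -/
theorem bose_heat_representation (x : ℝ) (hx : 0 < x) :
    1 / (Real.exp x - 1) =
      ∫ t in Set.Ioi (0 : ℝ),
        ((4 * π) ^ (-(1 : ℝ) / 2) * t ^ (-(3 : ℝ) / 2) *
          ∑' k : ℕ, ((k : ℝ) + 1) * Real.exp (-((k : ℝ) + 1) ^ 2 / (4 * t))) *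
        Real.exp (-t * x ^ 2) := by
  set F : ℕ → ℝ → ℝ := fun k t => levyDensity (k + 1) t * exp (-t * x ^ 2)
  have hint (k : ℕ) : IntegrableOn (F k) (Ioi 0) :=
    integrableOn_levyDensity_mul_exp k.cast_add_one_pos hx
  have hval (k : ℕ) : ∫ t in Ioi 0, F k t = exp (-((k + 1) * x)) :=
    integral_levyDensity_mul_exp k.cast_add_one_pos hx
  have hnorm (k : ℕ) : ∫ t in Ioi 0, ‖F k t‖ = ∫ t in Ioi 0, F k t :=
    setIntegral_congr_fun measurableSet_Ioi fun t (ht : 0 < t) =>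
      norm_of_nonneg (by simp only [F, levyDensity]; positivity)
  have hsum := hasSum_integral_of_summable_integral_norm hint
    (by simpa only [hnorm, hval] using (hasSum_exp_neg_succ_mul hx).summable)
  simp only [hval] at hsum
  rw [(hasSum_exp_neg_succ_mul hx).unique hsum]
  simp only [F, levyDensity, tsum_mul_left, tsum_mul_right]
end

section
/- Let (ω_k^+)_{k≥1} and (ω_k^-)_{k≥1} be sequences of positive reals and β > 0. Then for each k, the quantity [E_f(βω_k^+) - E_f(βω_k^-)]·[E_b(βω_k^+) - E_b(βω_k^-)] equals sinh²(β(ω_k^+ - ω_k^-)/2) / (sinh(βω_k^+)·sinh(βω_k^-)), where E_f(x)=1/(e^x+1), E_b(x)=1/(e^x-1). -/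
/-!
Both the Fermi and the Bose differences factor through `sinh ((y - x) / 2)`:
`E_f x - E_f y = sinh ((y - x) / 2) / (2 cosh (x / 2) cosh (y / 2))` and
`E_b x - E_b y = sinh ((y - x) / 2) / (2 sinh (x / 2) sinh (y / 2))`.
Multiplying them, the denominators combine into `sinh x * sinh y` by the double-angle formula.
-/

open Real

lemma exp_eq_exp_half_sq (x : ℝ) : exp x = exp (x / 2) ^ 2 := by
  rw [← exp_nat_mul]; ring_nf

lemma sinh_half_sub_eq (x y : ℝ) :
    sinh ((y - x) / 2) = (exp (y / 2) / exp (x / 2) - exp (x / 2) / exp (y / 2)) / 2 := by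
  rw [sinh_eq, ← exp_sub, ← exp_sub]; ring_nf

lemma sinh_eq_two_mul_sinh_half_mul_cosh_half (x : ℝ) :
    sinh x = 2 * sinh (x / 2) * cosh (x / 2) := by
  rw [← sinh_two_mul]; ring_nf

lemma one_div_exp_add_one_sub (x y : ℝ) :
    1 / (exp x + 1) - 1 / (exp y + 1) = sinh ((y - x) / 2) / (2 * cosh (x / 2) * cosh (y / 2)) := by
  rw [sinh_half_sub_eq, cosh_eq, cosh_eq, exp_eq_exp_half_sq x, exp_eq_exp_half_sq y,
    exp_neg, exp_neg]
  have ha := (exp_pos (x / 2)).ne'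
  have hb := (exp_pos (y / 2)).ne'
  field_simp
  ring

lemma one_div_exp_sub_one_sub {x y : ℝ} (hx : x ≠ 0) (hy : y ≠ 0) :
    1 / (exp x - 1) - 1 / (exp y - 1) = sinh ((y - x) / 2) / (2 * sinh (x / 2) * sinh (y / 2)) := by
  have hex : exp x - 1 ≠ 0 := sub_ne_zero.2 (mt (exp_eq_one_iff x).1 hx)
  have hey : exp y - 1 ≠ 0 := sub_ne_zero.2 (mt (exp_eq_one_iff y).1 hy)
  rw [exp_eq_exp_half_sq] at hex hey
  rw [sinh_half_sub_eq, sinh_eq, sinh_eq, exp_eq_exp_half_sq x, exp_eq_exp_half_sq y,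
    exp_neg, exp_neg]
  have ha := (exp_pos (x / 2)).ne'
  have hb := (exp_pos (y / 2)).ne'
  field_simp
  ring

theorem fermi_sub_mul_bose_sub {x y : ℝ} (hx : x ≠ 0) (hy : y ≠ 0) :
    (1 / (exp x + 1) - 1 / (exp y + 1)) * (1 / (exp x - 1) - 1 / (exp y - 1)) =
      sinh ((x - y) / 2) ^ 2 / (sinh x * sinh y) := by
  have hsq : sinh ((x - y) / 2) ^ 2 = sinh ((y - x) / 2) ^ 2 := by
    rw [← neg_sub, neg_div, sinh_neg, neg_sq]
  rw [one_div_exp_add_one_sub, one_div_exp_sub_one_sub hx hy, hsq,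
    sinh_eq_two_mul_sinh_half_mul_cosh_half x, sinh_eq_two_mul_sinh_half_mul_cosh_half y]
  ring

/-- Pointwise identity for the bosonic Bogolyubov invariant with equal eigenprojections. -/
theorem bogolyubov_term_eq (ωp ωm : ℕ → ℝ) (hωp : ∀ k, 0 < ωp k) (hωm : ∀ k, 0 < ωm k)
    (β : ℝ) (hβ : 0 < β) (k : ℕ) :
    (1 / (Real.exp (β * ωp k) + 1) - 1 / (Real.exp (β * ωm k) + 1)) *
      (1 / (Real.exp (β * ωp k) - 1) - 1 / (Real.exp (β * ωm k) - 1)) =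
    Real.sinh (β * (ωp k - ωm k) / 2) ^ 2 /
      (Real.sinh (β * ωp k) * Real.sinh (β * ωm k)) := by
  rw [mul_sub β]
  exact fermi_sub_mul_bose_sub (mul_pos hβ (hωp k)).ne' (mul_pos hβ (hωm k)).ne'
end

section
/- Let f : (0,∞) → ℝ be defined by f(t) = (4π)^{-1/2} t^{-3/2} ∑_{k=1}^∞ k e^{-k²/(4t)} (the function h_b). Then t^{3/2} e^{1/(4t)} f(t) → (4π)^{-1/2} as t → 0⁺; in particular f(t) → 0 as t → 0⁺. -/
/-!
Multiplying the theta-type series by `exp (1 / (4 t))` turns its `k`-th term into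
`(k + 1) exp (-k (k + 2) / (4 t))`. As `t → 0⁺` each term with `k ≥ 1` tends to `0` and for
`t ≤ 1/2` the terms are dominated by the summable `(k + 1) exp (-k)`, so by Tannery's theorem
the series tends to its `k = 0` term `1`. The second limit follows because
`t ^ (-3/2) exp (-1 / (4 t)) → 0`.
-/

open Real Filter Topology

lemma tendsto_rpow_mul_exp_neg_div_nhdsGT_zero (s : ℝ) {c : ℝ} (hc : 0 < c) :
    Tendsto (fun t : ℝ => t ^ s * exp (-c / t)) (𝓝[>] 0) (𝓝 0) := by
  refine ((tendsto_rpow_mul_exp_neg_mul_atTop_nhds_zero (-s) c hc).comp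
    tendsto_inv_nhdsGT_zero).congr' ?_
  filter_upwards [self_mem_nhdsWithin] with t (ht : 0 < t)
  simp only [Function.comp_apply, inv_rpow ht.le, rpow_neg ht.le, inv_inv, div_eq_mul_inv]

lemma tendsto_exp_neg_div_nhdsGT_zero {c : ℝ} (hc : 0 < c) :
    Tendsto (fun t : ℝ => exp (-c / t)) (𝓝[>] 0) (𝓝 0) := by
  simpa using tendsto_rpow_mul_exp_neg_div_nhdsGT_zero 0 hc

lemma summable_succ_mul_exp_neg_nat : Summable fun k : ℕ => ((k : ℝ) + 1) * exp (-k) := by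
  simpa [add_mul] using (summable_pow_mul_exp_neg_nat_mul 1 one_pos).add summable_exp_neg_nat

lemma exp_mul_tsum_succ_mul_exp (t : ℝ) :
    exp (1 / (4 * t)) * ∑' k : ℕ, ((k : ℝ) + 1) * exp (-((k : ℝ) + 1) ^ 2 / (4 * t)) =
      ∑' k : ℕ, ((k : ℝ) + 1) * exp (-(k * (k + 2)) / (4 * t)) := by
  rw [← tsum_mul_left]
  congr 1 with k
  rw [mul_left_comm, ← exp_add]
  ring_nf

lemma tendsto_tsum_succ_mul_exp_neg_div :
    Tendsto (fun t : ℝ => ∑' k : ℕ, ((k : ℝ) + 1) * exp (-(k * (k + 2)) / (4 * t)))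
      (𝓝[>] 0) (𝓝 1) := by
  have hlim (k : ℕ) : Tendsto (fun t : ℝ => ((k : ℝ) + 1) * exp (-(k * (k + 2)) / (4 * t)))
      (𝓝[>] 0) (𝓝 (if k = 0 then 1 else 0)) := by
    rcases Nat.eq_zero_or_pos k with rfl | hk
    · simp
    have hc : (0 : ℝ) < k * (k + 2) / 4 := by positivity
    have hexp := tendsto_exp_neg_div_nhdsGT_zero hc
    simp only [neg_div, div_div] at hexp
    simpa [hk.ne', neg_div] using hexp.const_mul ((k : ℝ) + 1)
  have hbound : ∀ᶠ t in 𝓝[>] (0 : ℝ), ∀ k : ℕ,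
      ‖((k : ℝ) + 1) * exp (-(k * (k + 2)) / (4 * t))‖ ≤ ((k : ℝ) + 1) * exp (-k) := by
    filter_upwards [Ioo_mem_nhdsGT (show (0 : ℝ) < 1 / 2 by norm_num)] with t ⟨ht0, ht⟩ k
    rw [Real.norm_of_nonneg (by positivity)]
    gcongr
    rw [div_le_iff₀ (by positivity)]
    nlinarith [k.cast_nonneg (α := ℝ)]
  simpa using tendsto_tsum_of_dominated_convergence summable_succ_mul_exp_neg_nat hlim hbound

/-- Small-t asymptotics of h_b: h_b(t) ~ (4π)^{-1/2} t^{-3/2} e^{-1/(4t)} as t → 0⁺. -/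
theorem hb_small_t (f : ℝ → ℝ)
    (hf : ∀ t > 0, f t =
      (4 * π) ^ (-(1 : ℝ) / 2) * t ^ (-(3 : ℝ) / 2) *
        ∑' k : ℕ, ((k : ℝ) + 1) * Real.exp (-((k : ℝ) + 1) ^ 2 / (4 * t))) :
    Tendsto (fun t => t ^ ((3 : ℝ) / 2) * Real.exp (1 / (4 * t)) * f t)
        (nhdsWithin 0 (Set.Ioi 0)) (nhds ((4 * π) ^ (-(1 : ℝ) / 2))) ∧
    Tendsto f (nhdsWithin 0 (Set.Ioi 0)) (nhds 0) := by
  have hscaled : Tendsto (fun t => t ^ ((3 : ℝ) / 2) * Real.exp (1 / (4 * t)) * f t)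
      (𝓝[>] 0) (𝓝 ((4 * π) ^ (-(1 : ℝ) / 2))) := by
    have hlim := tendsto_tsum_succ_mul_exp_neg_div.const_mul ((4 * π) ^ (-(1 : ℝ) / 2))
    rw [mul_one] at hlim
    refine hlim.congr' ?_
    filter_upwards [self_mem_nhdsWithin] with t (ht : 0 < t)
    have hpow : t ^ ((3 : ℝ) / 2) * t ^ (-(3 : ℝ) / 2) = 1 := by
      rw [← rpow_add ht]; norm_num
    rw [hf t ht, ← exp_mul_tsum_succ_mul_exp]
    linear_combination (-(4 * π) ^ (-(1 : ℝ) / 2) * exp (1 / (4 * t)) *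
      ∑' k : ℕ, ((k : ℝ) + 1) * exp (-((k : ℝ) + 1) ^ 2 / (4 * t))) * hpow
  refine ⟨hscaled, ?_⟩
  have hzero := hscaled.mul
    (tendsto_rpow_mul_exp_neg_div_nhdsGT_zero (-(3 / 2)) (c := 1 / 4) (by norm_num))
  rw [mul_zero] at hzero
  refine hzero.congr' ?_
  filter_upwards [self_mem_nhdsWithin] with t (ht : 0 < t)
  have hpow : t ^ ((3 : ℝ) / 2) * t ^ (-(3 / 2) : ℝ) = 1 := by
    rw [← rpow_add ht]; norm_num
  have hexp : exp (1 / (4 * t)) * exp (-(1 / 4) / t) = 1 := by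
    rw [← exp_add]; ring_nf; exact exp_zero
  linear_combination (exp (1 / (4 * t)) * exp (-(1 / 4) / t) * f t) * hpow + f t * hexp
end

section
/- As t → ∞, the function h_b(t) = (4π)^{-1/2} t^{-3/2} ∑_{k=1}^∞ k e^{-k²/(4t)} satisfies h_b(t)·√(π t) → 1, i.e., h_b(t) ~ π^{-1/2} t^{-1/2}. -/
/-!
Write `a = 1 / (4 t)` and `g k = exp (-a k²)`. Since `1 + u ≤ exp u`, the telescoping differences
satisfy `a (2k+1) g (k+1) ≤ g k - g (k+1) ≤ a (2k+1) g k`; summing over `k` gives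
`|2a ∑ k g k - 1| ≤ a ∑ g k`. Comparing `∑_{k ≥ 1} g k` with `∫₀^∞ exp (-a x²) = √(π/a) / 2` bounds the
right-hand side by `a + √(π a) / 2 → 0`. Finally `f t · √(π t) = 2a ∑ k g k`.
-/

open Real Filter Topology MeasureTheory

lemma summable_pow_mul_exp_neg_mul_sq (n : ℕ) {a : ℝ} (ha : 0 < a) :
    Summable fun k : ℕ => (k : ℝ) ^ n * exp (-a * k ^ 2) := by
  refine (summable_pow_mul_exp_neg_nat_mul n ha).of_nonneg_of_le (fun k => by positivity)
    fun k => mul_le_mul_of_nonneg_left (exp_le_exp.2 ?_) (by positivity)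
  have : (k : ℝ) ≤ (k : ℝ) ^ 2 := by exact_mod_cast Nat.le_self_pow two_ne_zero k
  nlinarith

lemma exp_neg_mul_sq_sub_le (a x : ℝ) :
    exp (-a * x ^ 2) - exp (-a * (x + 1) ^ 2) ≤ a * (2 * x + 1) * exp (-a * x ^ 2) := by
  have hsplit : exp (-a * (x + 1) ^ 2) = exp (-a * x ^ 2) * exp (-(a * (2 * x + 1))) := by
    rw [← exp_add]; ring_nf
  rw [hsplit]
  nlinarith [add_one_le_exp (-(a * (2 * x + 1))), exp_pos (-a * x ^ 2)]

lemma le_exp_neg_mul_sq_sub (a x : ℝ) :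
    a * (2 * x + 1) * exp (-a * (x + 1) ^ 2) ≤ exp (-a * x ^ 2) - exp (-a * (x + 1) ^ 2) := by
  have hsplit : exp (-a * x ^ 2) = exp (-a * (x + 1) ^ 2) * exp (a * (2 * x + 1)) := by
    rw [← exp_add]; ring_nf
  rw [hsplit]
  nlinarith [add_one_le_exp (a * (2 * x + 1)), exp_pos (-a * (x + 1) ^ 2)]

lemma abs_two_mul_tsum_mul_exp_neg_mul_sq_sub_one_le {a : ℝ} (ha : 0 < a) :
    |2 * a * ∑' k : ℕ, k * exp (-a * k ^ 2) - 1| ≤ a * ∑' k : ℕ, exp (-a * k ^ 2) := by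
  set S := ∑' k : ℕ, k * exp (-a * k ^ 2)
  set T := ∑' k : ℕ, exp (-a * k ^ 2)
  have hT : HasSum (fun k : ℕ => exp (-a * k ^ 2)) T := by
    simpa only [pow_zero, one_mul] using (summable_pow_mul_exp_neg_mul_sq 0 ha).hasSum
  have hS : HasSum (fun k : ℕ => k * exp (-a * k ^ 2)) S := by
    simpa only [pow_one] using (summable_pow_mul_exp_neg_mul_sq 1 ha).hasSum
  have hT_succ : HasSum (fun k : ℕ => exp (-a * (k + 1) ^ 2)) (T - 1) := by
    simpa using (hasSum_nat_add_iff' 1).2 hT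
  have hS_succ : HasSum (fun k : ℕ => (k + 1) * exp (-a * (k + 1) ^ 2)) S := by
    simpa using (hasSum_nat_add_iff' 1).2 hS
  have htelescope : HasSum (fun k : ℕ => exp (-a * k ^ 2) - exp (-a * (k + 1) ^ 2)) 1 := by
    simpa using hT.sub hT_succ
  have hupper : 1 ≤ 2 * a * S + a * T :=
    hasSum_le (fun k : ℕ => (exp_neg_mul_sq_sub_le a k).trans_eq (by ring)) htelescope
      ((hS.mul_left (2 * a)).add (hT.mul_left a))
  have hlower : 2 * a * S - a * (T - 1) ≤ 1 :=
    hasSum_le (fun k : ℕ => (le_exp_neg_mul_sq_sub a k).trans_eq' (by ring))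
      ((hS_succ.mul_left (2 * a)).sub (hT_succ.mul_left a)) htelescope
  rw [abs_le]
  constructor <;> nlinarith

lemma antitoneOn_exp_neg_mul_sq {a : ℝ} (ha : 0 ≤ a) :
    AntitoneOn (fun x : ℝ => exp (-a * x ^ 2)) (Set.Ici 0) := by
  intro x hx y _ hxy
  simp only [exp_le_exp, neg_mul, neg_le_neg_iff]
  exact mul_le_mul_of_nonneg_left (pow_le_pow_left₀ hx hxy 2) ha

lemma tsum_exp_neg_mul_sq_succ_le {a : ℝ} (ha : 0 < a) :
    ∑' k : ℕ, exp (-a * ((k : ℝ) + 1) ^ 2) ≤ √(π / a) / 2 := by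
  refine Real.tsum_le_of_sum_range_le (fun _ => (exp_pos _).le) fun n => ?_
  have hsum := AntitoneOn.sum_le_integral (x₀ := 0) (a := n)
    ((antitoneOn_exp_neg_mul_sq ha.le).mono Set.Icc_subset_Ici_self)
  simp only [zero_add, Nat.cast_add, Nat.cast_one] at hsum
  calc _ ≤ ∫ x in (0 : ℝ)..n, exp (-a * x ^ 2) := hsum
    _ = ∫ x in Set.Ioc 0 (n : ℝ), exp (-a * x ^ 2) := intervalIntegral.integral_of_le n.cast_nonneg
    _ ≤ ∫ x in Set.Ioi 0, exp (-a * x ^ 2) :=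
      setIntegral_mono_set (integrable_exp_neg_mul_sq ha).integrableOn
        (.of_forall fun _ => (exp_pos _).le) Set.Ioc_subset_Ioi_self.eventuallyLE
    _ = √(π / a) / 2 := integral_gaussian_Ioi a

lemma tendsto_two_mul_tsum_mul_exp_neg_mul_sq :
    Tendsto (fun a => 2 * a * ∑' k : ℕ, k * exp (-a * k ^ 2)) (𝓝[>] 0) (𝓝 1) := by
  rw [tendsto_iff_norm_sub_tendsto_zero]
  have hbound : Tendsto (fun a : ℝ => a + √(π * a) / 2) (𝓝[>] 0) (𝓝 0) := by
    refine (Continuous.tendsto' ?_ 0 0 (by simp)).mono_left nhdsWithin_le_nhds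
    fun_prop
  refine squeeze_zero' (.of_forall fun _ => norm_nonneg _) ?_ hbound
  filter_upwards [self_mem_nhdsWithin] with a (ha : 0 < a)
  have hT := (summable_pow_mul_exp_neg_mul_sq 0 ha).tsum_eq_zero_add
  simp only [pow_zero, one_mul, Nat.cast_zero, zero_pow two_ne_zero, mul_zero, exp_zero,
    Nat.cast_add, Nat.cast_one] at hT
  have hsqrt : a * √(π / a) = √(π * a) := by
    rw [← sqrt_sq ha.le, ← sqrt_mul (sq_nonneg a), sqrt_sq ha.le]; field_simp
  calc ‖2 * a * ∑' k : ℕ, k * exp (-a * k ^ 2) - 1‖ ≤ a * ∑' k : ℕ, exp (-a * k ^ 2) :=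
        abs_two_mul_tsum_mul_exp_neg_mul_sq_sub_one_le ha
    _ ≤ a * (1 + √(π / a) / 2) := by
        rw [hT]; gcongr; exact tsum_exp_neg_mul_sq_succ_le ha
    _ = a + √(π * a) / 2 := by rw [← hsqrt]; ring

lemma four_pi_rpow_mul_rpow_mul_sqrt {t : ℝ} (ht : 0 < t) :
    (4 * π) ^ (-(1 : ℝ) / 2) * t ^ (-(3 : ℝ) / 2) * √(π * t) = 2 * (4 * t)⁻¹ := by
  have h4 : (4 : ℝ) ^ (-(1 : ℝ) / 2) = 2⁻¹ := by
    rw [show (4 : ℝ) = 2 ^ (2 : ℝ) by norm_num, ← rpow_mul (by norm_num)]; norm_num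
  have hpi : π ^ (-(1 : ℝ) / 2) * π ^ (1 / 2 : ℝ) = 1 := by
    rw [← rpow_add pi_pos]; norm_num
  have ht' : t ^ (-(3 : ℝ) / 2) * t ^ (1 / 2 : ℝ) = t⁻¹ := by
    rw [← rpow_add ht, ← rpow_neg_one]; norm_num
  rw [sqrt_eq_rpow, mul_rpow (by norm_num) pi_pos.le, mul_rpow pi_pos.le ht.le, h4]
  linear_combination (1 / 2 : ℝ) * t ^ (-(3 : ℝ) / 2) * t ^ (1 / 2 : ℝ) * hpi + (1 / 2) * ht'

/-- Large-t asymptotics of h_b: h_b(t) ~ π^{-1/2} t^{-1/2} as t → ∞. -/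
theorem hb_large_t (f : ℝ → ℝ)
    (hf : ∀ t > 0, f t =
      (4 * π) ^ (-(1 : ℝ) / 2) * t ^ (-(3 : ℝ) / 2) *
        ∑' k : ℕ, ((k : ℝ) + 1) * Real.exp (-((k : ℝ) + 1) ^ 2 / (4 * t))) :
    Tendsto (fun t => f t * Real.sqrt (π * t)) atTop (nhds 1) := by
  have hscale : Tendsto (fun t : ℝ => (4 * t)⁻¹) atTop (𝓝[>] 0) :=
    tendsto_inv_atTop_nhdsGT_zero.comp (tendsto_id.const_mul_atTop four_pos)
  refine (tendsto_two_mul_tsum_mul_exp_neg_mul_sq.comp hscale).congr' ?_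
  filter_upwards [eventually_gt_atTop 0] with t ht
  have hshift :=
    (summable_pow_mul_exp_neg_mul_sq 1 (inv_pos.2 (mul_pos four_pos ht))).tsum_eq_zero_add
  have hsum : ∑' k : ℕ, ((k : ℝ) + 1) * exp (-((k : ℝ) + 1) ^ 2 / (4 * t)) =
      ∑' k : ℕ, k * exp (-(4 * t)⁻¹ * k ^ 2) := by
    simp only [pow_one, Nat.cast_zero, zero_mul, zero_add, Nat.cast_add, Nat.cast_one] at hshift
    rw [hshift]
    congr! 4
    ring
  rw [Function.comp_apply, hf t ht, hsum, mul_right_comm ((4 * π) ^ _ * _),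
    four_pi_rpow_mul_rpow_mul_sqrt ht]
end
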